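/- Let C : ℝ^d → ℝ be differentiable with L-Lipschitz gradient for some L > 0, let q_0, …, q_{t−1} ∈ ℝ^d be data points, and let α, β ∈ ℝ with α > 0 ≥ β. For each pair (i, j) with 0 ≤ i, j ≤ t−1, define the quadratic function Q_{ij}(s) = (L(α−β)/2)‖s‖² + α·(ℓ(s; C, q_i) − L·(q_i·s − ‖q_i‖²/2)) + β·(ℓ(s; C, q_j) + L·(q_j·s − ‖q_j‖²/2)). Then each Q_{ij} is convex and m_{t,α,β}(s) = min_{0≤i,j≤t−1} Q_{ij}(s) for all s ∈ ℝ^d; in particular, m_{t,α,β} is the pointwise minimum of at most t² convex quadratic functions. -/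

import Mathlib

/-- Linear approximant `ℓ(s; C, q) = C(q) + ∇C(q)·(s − q)`. -/
noncomputable def lapprox {d : ℕ} (C : EuclideanSpace ℝ (Fin d) → ℝ)
    (q s : EuclideanSpace ℝ (Fin d)) : ℝ :=
  C q + inner ℝ (gradient C q) (s - q)

/-- Data-driven majorant `C_{t−1}^+(s)` built from data points `q_0, …, q_{t−1}`. -/
noncomputable def ddMajorant {d t : ℕ} (ht : 0 < t) (C : EuclideanSpace ℝ (Fin d) → ℝ)
    (L : ℝ) (q : Fin t → EuclideanSpace ℝ (Fin d)) (s : EuclideanSpace ℝ (Fin d)) : ℝ :=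
  Finset.univ.inf' (Finset.univ_nonempty_iff.mpr (Fin.pos_iff_nonempty.mp ht))
    fun i => lapprox C (q i) s + L / 2 * ‖s - q i‖ ^ 2

/-- Data-driven minorant `C_{t−1}^-(s)` built from data points `q_0, …, q_{t−1}`. -/
noncomputable def ddMinorant {d t : ℕ} (ht : 0 < t) (C : EuclideanSpace ℝ (Fin d) → ℝ)
    (L : ℝ) (q : Fin t → EuclideanSpace ℝ (Fin d)) (s : EuclideanSpace ℝ (Fin d)) : ℝ :=
  Finset.univ.sup' (Finset.univ_nonempty_iff.mpr (Fin.pos_iff_nonempty.mp ht))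
    fun i => lapprox C (q i) s - L / 2 * ‖s - q i‖ ^ 2

/-- Surrogate `m_{t,α,β}(s) = α·C_{t−1}^+(s) + β·C_{t−1}^-(s)`. -/
noncomputable def surrogate {d t : ℕ} (ht : 0 < t) (C : EuclideanSpace ℝ (Fin d) → ℝ)
    (L α β : ℝ) (q : Fin t → EuclideanSpace ℝ (Fin d)) (s : EuclideanSpace ℝ (Fin d)) : ℝ :=
  α * ddMajorant ht C L q s + β * ddMinorant ht C L q s

/-- The quadratic function
`Q_{ij}(s) = (L(α−β)/2)‖s‖² + α(ℓ(s;C,q_i) − L(q_i·s − ‖q_i‖²/2)) + β(ℓ(s;C,q_j) + L(q_j·s − ‖q_j‖²/2))`. -/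
noncomputable def quadPiece {d t : ℕ} (C : EuclideanSpace ℝ (Fin d) → ℝ) (L α β : ℝ)
    (q : Fin t → EuclideanSpace ℝ (Fin d)) (i j : Fin t) (s : EuclideanSpace ℝ (Fin d)) : ℝ :=
  L * (α - β) / 2 * ‖s‖ ^ 2
    + α * (lapprox C (q i) s - L * ((inner ℝ (q i) s : ℝ) - ‖q i‖ ^ 2 / 2))
    + β * (lapprox C (q j) s + L * ((inner ℝ (q j) s : ℝ) - ‖q j‖ ^ 2 / 2))

lemma convexOn_normSq {d : ℕ} :
    ConvexOn ℝ (Set.univ : Set (EuclideanSpace ℝ (Fin d))) (fun s => ‖s‖ ^ 2) := by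
  refine ⟨convex_univ, fun x _ y _ a b ha hb hab => ?_⟩
  have h1 : ‖a • x + b • y‖ ≤ a * ‖x‖ + b * ‖y‖ := by
    calc ‖a • x + b • y‖ ≤ ‖a • x‖ + ‖b • y‖ := norm_add_le _ _
    _ = a * ‖x‖ + b * ‖y‖ := by rw [norm_smul, norm_smul, Real.norm_of_nonneg ha,
        Real.norm_of_nonneg hb]
  simp only [smul_eq_mul]
  nlinarith [norm_nonneg (a • x + b • y), norm_nonneg x, norm_nonneg y,
    sq_nonneg (‖x‖ - ‖y‖), mul_nonneg ha hb]

lemma convexOn_affine {d : ℕ} (v : EuclideanSpace ℝ (Fin d)) (k : ℝ) :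
    ConvexOn ℝ Set.univ (fun s : EuclideanSpace ℝ (Fin d) => (inner ℝ v s : ℝ) + k) := by
  refine ⟨convex_univ, fun x _ y _ a b ha hb hab => ?_⟩
  simp only [inner_add_right, inner_smul_right, smul_eq_mul]
  have h : (a + b) * k = k := by rw [hab, one_mul]
  nlinarith [h]

lemma quadPiece_eq_combo {d t : ℕ} (C : EuclideanSpace ℝ (Fin d) → ℝ) (L α β : ℝ)
    (q : Fin t → EuclideanSpace ℝ (Fin d)) (i j : Fin t) (s : EuclideanSpace ℝ (Fin d)) :
    quadPiece C L α β q i j s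
      = α * (lapprox C (q i) s + L / 2 * ‖s - q i‖ ^ 2)
        + β * (lapprox C (q j) s - L / 2 * ‖s - q j‖ ^ 2) := by
  have h1 : ‖s - q i‖ ^ 2 = ‖s‖ ^ 2 - 2 * (inner ℝ (q i) s : ℝ) + ‖q i‖ ^ 2 := by
    rw [norm_sub_sq_real, real_inner_comm]
  have h2 : ‖s - q j‖ ^ 2 = ‖s‖ ^ 2 - 2 * (inner ℝ (q j) s : ℝ) + ‖q j‖ ^ 2 := by
    rw [norm_sub_sq_real, real_inner_comm]
  simp only [quadPiece, h1, h2]; ring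

/-- For `α > 0 ≥ β`, each `Q_{ij}` is convex and the surrogate `m_{t,α,β}` is the pointwise
minimum of the (at most `t²`) convex quadratics `Q_{ij}`. -/
theorem surrogate_eq_min_convex_quadratics {d t : ℕ} (ht : 0 < t)
    (C : EuclideanSpace ℝ (Fin d) → ℝ) (L : ℝ) (hL : 0 < L)
    (hdiff : Differentiable ℝ C)
    (hlip : ∀ x y, ‖gradient C y - gradient C x‖ ≤ L * ‖y - x‖)
    (q : Fin t → EuclideanSpace ℝ (Fin d)) (α β : ℝ) (hα : 0 < α) (hβ : β ≤ 0) :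
    (∀ i j : Fin t, ConvexOn ℝ Set.univ (quadPiece C L α β q i j)) ∧
    (∀ s, surrogate ht C L α β q s
      = Finset.univ.inf' (Finset.univ_nonempty_iff.mpr
          ⟨(⟨0, ht⟩, ⟨0, ht⟩)⟩)
        (fun p : Fin t × Fin t => quadPiece C L α β q p.1 p.2 s)) := by
  constructor
  · -- convexity
    intro i j
    have hc : (0:ℝ) ≤ L * (α - β) / 2 := by nlinarith
    set v : EuclideanSpace ℝ (Fin d) :=
      α • gradient C (q i) + β • gradient C (q j) + (β * L) • q j - (α * L) • q i with hv
    set k : ℝ := α * (C (q i) - (inner ℝ (gradient C (q i)) (q i) : ℝ) + L * ‖q i‖ ^ 2 / 2)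
      + β * (C (q j) - (inner ℝ (gradient C (q j)) (q j) : ℝ) - L * ‖q j‖ ^ 2 / 2) with hk
    have heq : quadPiece C L α β q i j
        = fun s => L * (α - β) / 2 * ‖s‖ ^ 2 + ((inner ℝ v s : ℝ) + k) := by
      funext s
      simp only [quadPiece, lapprox, hv, hk, inner_sub_right, inner_sub_left, inner_add_left,
        inner_smul_left, RCLike.inner_apply, conj_trivial, map_mul]
      push_cast
      ring
    rw [heq]
    exact (convexOn_normSq.smul hc).add (convexOn_affine v k)
  · intro s
    classical
    set F : Fin t → ℝ := fun i => lapprox C (q i) s + L / 2 * ‖s - q i‖ ^ 2 with hF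
    set G : Fin t → ℝ := fun j => lapprox C (q j) s - L / 2 * ‖s - q j‖ ^ 2 with hG
    have hne : (Finset.univ : Finset (Fin t)).Nonempty :=
      Finset.univ_nonempty_iff.mpr (Fin.pos_iff_nonempty.mp ht)
    have hne2 : (Finset.univ : Finset (Fin t × Fin t)).Nonempty :=
      Finset.univ_nonempty_iff.mpr ⟨(⟨0, ht⟩, ⟨0, ht⟩)⟩
    have h1 : α * Finset.univ.inf' hne F = Finset.univ.inf' hne (fun i => α * F i) := by
      apply le_antisymm
      · apply Finset.le_inf'
        intro i _
        exact mul_le_mul_of_nonneg_left (Finset.inf'_le _ (Finset.mem_univ i)) hα.le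
      · obtain ⟨i, _, hi⟩ := Finset.exists_mem_eq_inf' hne F
        rw [hi]
        exact Finset.inf'_le _ (Finset.mem_univ i)
    have h2 : β * Finset.univ.sup' hne G = Finset.univ.inf' hne (fun j => β * G j) := by
      apply le_antisymm
      · apply Finset.le_inf'
        intro j _
        exact mul_le_mul_of_nonpos_left (Finset.le_sup' _ (Finset.mem_univ j)) hβ
      · obtain ⟨j, _, hj⟩ := Finset.exists_mem_eq_sup' hne G
        rw [hj]
        exact Finset.inf'_le _ (Finset.mem_univ j)
    have h3 : Finset.univ.inf' hne (fun i => α * F i) + Finset.univ.inf' hne (fun j => β * G j)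
        = Finset.univ.inf' hne2 (fun p : Fin t × Fin t => α * F p.1 + β * G p.2) := by
      apply le_antisymm
      · apply Finset.le_inf'
        intro p _
        exact add_le_add (Finset.inf'_le _ (Finset.mem_univ p.1))
          (Finset.inf'_le _ (Finset.mem_univ p.2))
      · obtain ⟨i, _, hi⟩ := Finset.exists_mem_eq_inf' hne (fun i => α * F i)
        obtain ⟨j, _, hj⟩ := Finset.exists_mem_eq_inf' hne (fun j => β * G j)
        rw [hi, hj]
        exact Finset.inf'_le _ (Finset.mem_univ (i, j))
    have h4 : ∀ p : Fin t × Fin t, α * F p.1 + β * G p.2 = quadPiece C L α β q p.1 p.2 s := by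
      intro p
      rw [quadPiece_eq_combo]
    calc surrogate ht C L α β q s
        = α * Finset.univ.inf' hne F + β * Finset.univ.sup' hne G := rfl
      _ = Finset.univ.inf' hne2 (fun p : Fin t × Fin t => α * F p.1 + β * G p.2) := by
          rw [h1, h2, h3]
      _ = _ := by
          apply Finset.inf'_congr _ rfl
          intro p _
          exact h4 p
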